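/- Let F_q be a finite field of odd order, let H = {a² : a ∈ F_q^×} be the subgroup of squares (the unique subgroup of index 2 in F_q^×), and let χ : H → ℂ^× be a nontrivial character. Let χ₁ and χ₂ be the two multiplicative characters of F_q^× extending χ, and let R and S be sets of representatives of the H-orbits of F_q^×. Then the (χ,R,S)-compressed Fourier matrix, with (r,s)-entry Σ_{h∈H} χ(h)ε(hrs), has the nonvanishing minors property if and only if G(χ₁) ≠ G(χ₂) and G(χ₁) ≠ −G(χ₂). -/

import Mathlib

/-! Viewed as multiplicative characters of `F`, the two extensions satisfy `χ₂ = χ₁ η` with `η` the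
quadratic character, so averaging their twisted Gauss sums over the squares gives the `(r, s)` entry
as `χ₁(rs)⁻¹ (G(χ₁) + η(r) η(s) G(χ₂)) / 2`. The representatives `R` (and `S`) consist of one
square and one nonsquare, so only the `1 × 1` and `2 × 2` minors occur. The former vanish exactly
when `G(χ₁) = ± G(χ₂)`; the latter is a nonzero multiple of `G(χ₁) G(χ₂)`, and Gauss sums of
nontrivial characters never vanish. -/

open Complex

/-- The canonical additive character of a finite field `F` of characteristic `p`:
`ε(x) = exp(2πi·Tr(x)/p)`, where `Tr : F → F_p` is the absolute trace. -/
noncomputable def canonicalAddChar (p : ℕ) [Fact p.Prime] (F : Type*) [Field F]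
    [CharP F p] (x : F) : ℂ :=
  letI := ZMod.algebra F p
  Complex.exp (2 * Real.pi * Complex.I * ((Algebra.trace (ZMod p) F x).val : ℕ) / p)

/-- The Gauss sum of a multiplicative character `φ : Fˣ → ℂˣ`:
`G(φ) = Σ_{a ∈ Fˣ} ε(a)φ(a)`. -/
noncomputable def gaussSum' (p : ℕ) [Fact p.Prime] (F : Type*) [Field F] [Fintype F] [DecidableEq F]
    [CharP F p] (φ : Fˣ →* ℂˣ) : ℂ :=
  ∑ a : Fˣ, canonicalAddChar p F (a : F) * (φ a : ℂ)

/-- `R` is a set of representatives of the orbits of the multiplication action of the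
subgroup `H ≤ Fˣ` on the subset `X` of `F`. -/
def IsOrbitReprSet {F : Type*} [Field F] (H : Subgroup Fˣ) (X : Set F)
    (R : Finset F) : Prop :=
  ↑R ⊆ X ∧ ∀ x ∈ X, ∃! r, r ∈ R ∧ ∃ h : H, ((h : Fˣ) : F) * r = x

open Function

section CanonicalAddChar

variable (p : ℕ) [Fact p.Prime] (F : Type*) [Field F] [CharP F p]

noncomputable def canonicalAddCharHom : AddChar F ℂ :=
  letI := ZMod.algebra F p
  ZMod.stdAddChar.compAddMonoidHom (Algebra.trace (ZMod p) F).toAddMonoidHom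

theorem canonicalAddCharHom_apply (x : F) :
    canonicalAddCharHom p F x = canonicalAddChar p F x := by
  simp [canonicalAddCharHom, canonicalAddChar, ZMod.stdAddChar_apply, ZMod.toCircle_apply]

theorem isPrimitive_canonicalAddCharHom [Finite F] : (canonicalAddCharHom p F).IsPrimitive := by
  let := ZMod.algebra F p
  refine AddChar.IsPrimitive.of_ne_one fun h => ?_
  obtain ⟨x, hx⟩ := Algebra.trace_surjective (ZMod p) F 1
  have h1 : ZMod.stdAddChar (1 : ZMod p) = 1 := by
    simpa [canonicalAddCharHom, hx] using DFunLike.congr_fun h x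
  exact one_ne_zero (ZMod.injective_stdAddChar (h1.trans (AddChar.map_zero_eq_one _).symm))

variable [Fintype F] [DecidableEq F]

theorem gaussSum'_eq_gaussSum (φ : Fˣ →* ℂˣ) :
    gaussSum' p F φ = gaussSum (MulChar.ofUnitHom φ) (canonicalAddCharHom p F) := by
  refine Fintype.sum_of_injective _ Units.val_injective _ _ (fun a ha => ?_) fun u => ?_
  · rw [MulChar.map_nonunit _ fun hu => ha ⟨hu.unit, rfl⟩, zero_mul]
  · rw [MulChar.ofUnitHom_coe, canonicalAddCharHom_apply, mul_comm]

theorem gaussSum'_ne_zero {φ : Fˣ →* ℂˣ} (hφ : φ ≠ 1) : gaussSum' p F φ ≠ 0 := by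
  rw [gaussSum'_eq_gaussSum]
  refine gaussSum_ne_zero_of_nontrivial (by exact_mod_cast Fintype.card_ne_zero) (fun h => hφ ?_)
    (isPrimitive_canonicalAddCharHom p F)
  ext u
  simpa using DFunLike.congr_fun h (u : F)

end CanonicalAddChar

theorem MulChar.ofUnitHom_eq_mul_quadraticChar {F R' : Type*} [Field F] [Fintype F]
    [DecidableEq F] [CommRing R'] [IsDomain R'] {χ₁ χ₂ : Fˣ →* R'ˣ}
    (hsq : ∀ u : Fˣ, χ₁ (u ^ 2) = χ₂ (u ^ 2)) (hne : χ₁ ≠ χ₂) :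
    ofUnitHom χ₂ = ofUnitHom χ₁ * (quadraticChar F).ringHomComp (Int.castRingHom R') := by
  have eq_of_one : ∀ u : Fˣ, quadraticChar F u = 1 → χ₁ u = χ₂ u := fun u hu => by
    obtain ⟨b, hb⟩ := (quadraticChar_one_iff_isSquare u.ne_zero).1 hu
    have hb0 : b ≠ 0 := by rintro rfl; exact u.ne_zero (by simp at hb)
    rw [show u = Units.mk0 b hb0 ^ 2 from Units.ext (by simp [hb, sq])]
    exact hsq _
  refine ext fun u => ?_
  simp only [coeToFun_mul, Pi.mul_apply, ringHomComp_apply, eq_intCast, ofUnitHom_coe]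
  rcases quadraticChar_dichotomy u.ne_zero with hu | hu
  · rw [hu, eq_of_one u hu, Int.cast_one, mul_one]
  rw [hu, Int.cast_neg, Int.cast_one, mul_neg_one]
  have hsq_u : (χ₂ u : R') ^ 2 = (χ₁ u : R') ^ 2 := by
    simpa using congrArg Units.val (hsq u).symm
  refine (sq_eq_sq_iff_eq_or_eq_neg.1 hsq_u).resolve_left fun h => hne (MonoidHom.ext fun v => ?_)
  rcases quadraticChar_dichotomy v.ne_zero with hv | hv
  · exact eq_of_one v hv
  have hvu := eq_of_one (v * u) (by rw [Units.val_mul, map_mul, hu, hv]; norm_num)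
  rw [map_mul, map_mul, Units.ext h] at hvu
  exact mul_right_cancel hvu

namespace IsOrbitReprSet

variable {F : Type*} [Field F] {H : Subgroup Fˣ} {R : Finset F}

theorem eq_of_mul_eq {X : Set F} (hR : IsOrbitReprSet H X R) {r r' : F} (hr : r ∈ R)
    (hr' : r' ∈ R) (h : H) (e : ((h : Fˣ) : F) * r' = r) : r = r' :=
  (hR.2 r (hR.1 hr)).unique ⟨hr, 1, one_mul r⟩ ⟨hr', h, e⟩

variable (hR : IsOrbitReprSet H {x | x ≠ 0} R)
include hR

theorem ne_zero {r : F} (hr : r ∈ R) : r ≠ 0 := hR.1 hr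

variable [Fintype F] [DecidableEq F] (hH : ∀ u : Fˣ, u ∈ H ↔ ∃ a : Fˣ, a ^ 2 = u)
include hH

theorem injOn_quadraticChar : Set.InjOn (quadraticChar F) R := by
  intro r hr r' hr' he
  have hr0 := hR.ne_zero hr
  have hr'0 := hR.ne_zero hr'
  obtain ⟨b, hb⟩ : IsSquare (r * r') := by
    rw [← quadraticChar_one_iff_isSquare (mul_ne_zero hr0 hr'0), map_mul, he, ← sq,
      quadraticChar_sq_one hr'0]
  have hb0 : b ≠ 0 := by rintro rfl; simp_all
  let u := Units.mk0 (b / r') (div_ne_zero hb0 hr'0)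
  refine hR.eq_of_mul_eq hr hr' ⟨u ^ 2, (hH _).2 ⟨u, rfl⟩⟩ ?_
  simp only [Units.val_pow_eq_pow_val, Units.val_mk0, u]
  field_simp
  linear_combination -hb

theorem exists_quadraticChar_eq {x : F} (hx : x ≠ 0) :
    ∃ r ∈ R, quadraticChar F r = quadraticChar F x := by
  obtain ⟨r, ⟨hr, h, rfl⟩, -⟩ := hR.2 x hx
  obtain ⟨a, ha⟩ := (hH h).1 h.2
  refine ⟨r, hr, ?_⟩
  rw [map_mul, ← ha, Units.val_pow_eq_pow_val, quadraticChar_sq_one' a.ne_zero, one_mul]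

theorem injective_quadraticChar {R' : Type*} [AddGroupWithOne R'] [CharZero R'] :
    Injective fun r : R => (quadraticChar F r : R') :=
  fun r r' h => Subtype.ext (hR.injOn_quadraticChar hH r.2 r'.2 (Int.cast_injective h))

theorem range_quadraticChar {R' : Type*} [Ring R'] (hF : ringChar F ≠ 2) :
    Set.range (fun r : R => (quadraticChar F r : R')) = {1, -1} := by
  ext c
  constructor
  · rintro ⟨r, rfl⟩
    rcases quadraticChar_dichotomy (hR.ne_zero r.2) with h | h <;> simp [h]
  rintro (rfl | rfl)
  · obtain ⟨r, hr, h⟩ := hR.exists_quadraticChar_eq hH one_ne_zero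
    exact ⟨⟨r, hr⟩, by simp [h]⟩
  · obtain ⟨a, ha⟩ := quadraticChar_exists_neg_one' hF
    obtain ⟨r, hr, h⟩ := hR.exists_quadraticChar_eq hH a.ne_zero
    exact ⟨⟨r, hr⟩, by simp [h, ha]⟩

end IsOrbitReprSet

section SquaresSum

variable {F R' : Type*} [Field F] [Fintype F] [DecidableEq F] {H : Subgroup Fˣ} [Fintype H]

theorem two_mul_sum_subgroup_squares [CommRing R'] (hH : ∀ u : Fˣ, u ∈ H ↔ ∃ a : Fˣ, a ^ 2 = u)
    (f : F → R') (hf : f 0 = 0) :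
    2 * ∑ h : H, f ((h : Fˣ) : F) = ∑ a : F, (1 + quadraticChar F a) * f a := by
  rw [Finset.mul_sum]
  refine Fintype.sum_of_injective (fun h : H => ((h : Fˣ) : F))
    (Units.val_injective.comp Subtype.val_injective) _ _ (fun a ha => ?_) fun h => ?_
  · rcases eq_or_ne a 0 with rfl | ha0
    · rw [hf, mul_zero]
    have hq : quadraticChar F a = -1 := by
      refine (quadraticChar_dichotomy ha0).resolve_left fun hq => ha ?_
      obtain ⟨b, rfl⟩ := (quadraticChar_one_iff_isSquare ha0).1 hq
      have hb0 : b ≠ 0 := by rintro rfl; simp at ha0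
      exact ⟨⟨Units.mk0 b hb0 ^ 2, (hH _).2 ⟨_, rfl⟩⟩, by simp [sq]⟩
    rw [hq]
    simp
  · obtain ⟨a, ha⟩ := (hH h).1 h.2
    rw [← ha, Units.val_pow_eq_pow_val, quadraticChar_sq_one' a.ne_zero]
    norm_num

variable [Field R']

omit [DecidableEq F] in
theorem sum_mulChar_mul_addChar_mul (ψ : MulChar F R') (ε : AddChar F R') {x : F} (hx : x ≠ 0) :
    ∑ a : F, ψ a * ε (a * x) = (ψ x)⁻¹ * gaussSum ψ ε := by
  have h := gaussSum_mulShift_eq ψ ε (Units.mk0 x hx)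
  simp only [gaussSum, AddChar.mulShift_apply, Units.val_mk0, MulChar.inv_apply_eq_inv'] at h
  simpa only [gaussSum, mul_comm x] using h

theorem two_mul_sum_subgroup_squares_mulChar_mul_addChar
    (hH : ∀ u : Fˣ, u ∈ H ↔ ∃ a : Fˣ, a ^ 2 = u) (ψ : MulChar F R') (ε : AddChar F R') {x : F}
    (hx : x ≠ 0) :
    2 * ∑ h : H, ψ ((h : Fˣ) : F) * ε ((h : Fˣ) * x) = (ψ x)⁻¹ * (gaussSum ψ ε +
      quadraticChar F x * gaussSum (ψ * (quadraticChar F).ringHomComp (Int.castRingHom R')) ε) := by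
  have hq : ((quadraticChar F x : R'))⁻¹ = quadraticChar F x := by
    rcases quadraticChar_dichotomy hx with h | h <;> simp [h]
  have hψq :=
    sum_mulChar_mul_addChar_mul (ψ * (quadraticChar F).ringHomComp (Int.castRingHom R')) ε hx
  simp only [MulChar.coeToFun_mul, Pi.mul_apply, MulChar.ringHomComp_apply, eq_intCast, mul_inv,
    hq, mul_comm (ψ _) (quadraticChar F _ : R'), mul_assoc] at hψq
  rw [two_mul_sum_subgroup_squares hH (fun a => ψ a * ε (a * x))
    (by rw [MulChar.map_zero, zero_mul])]
  simp only [add_mul, one_mul, Finset.sum_add_distrib, sum_mulChar_mul_addChar_mul ψ ε hx]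
  rw [hψq]
  ring

end SquaresSum

noncomputable def compressedFourierMatrix (p : ℕ) [Fact p.Prime] {F : Type*} [Field F] [CharP F p]
    (H : Subgroup Fˣ) [Fintype H] (χ : H →* ℂˣ) (R S : Finset F) : Matrix R S ℂ :=
  Matrix.of fun r s => ∑ h : H, (χ h : ℂ) * canonicalAddChar p F (((h : Fˣ) : F) * r * s)

theorem compressedFourierMatrix_apply {p : ℕ} [Fact p.Prime] {F : Type*} [Field F] [Fintype F]
    [DecidableEq F] [CharP F p] {H : Subgroup Fˣ} [Fintype H]
    (hH : ∀ u : Fˣ, u ∈ H ↔ ∃ a : Fˣ, a ^ 2 = u) {χ : H →* ℂˣ} {χ₁ χ₂ : Fˣ →* ℂˣ}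
    (hχ₁ : ∀ h : H, χ₁ (h : Fˣ) = χ h)
    (hψ : MulChar.ofUnitHom χ₂
      = MulChar.ofUnitHom χ₁ * (quadraticChar F).ringHomComp (Int.castRingHom ℂ))
    {R S : Finset F} (r : R) (s : S) (hr : (r : F) ≠ 0) (hs : (s : F) ≠ 0) :
    compressedFourierMatrix p H χ R S r s
      = ((MulChar.ofUnitHom χ₁ r)⁻¹ / 2) * (MulChar.ofUnitHom χ₁ s)⁻¹ *
        (gaussSum' p F χ₁ + quadraticChar F r * quadraticChar F s * gaussSum' p F χ₂) := by
  have h := two_mul_sum_subgroup_squares_mulChar_mul_addChar hH (MulChar.ofUnitHom χ₁)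
    (canonicalAddCharHom p F) (mul_ne_zero hr hs)
  rw [← hψ, ← gaussSum'_eq_gaussSum, ← gaussSum'_eq_gaussSum, map_mul, map_mul, mul_inv] at h
  simp only [MulChar.ofUnitHom_coe, hχ₁, canonicalAddCharHom_apply, ← mul_assoc] at h
  push_cast at h
  rw [compressedFourierMatrix, Matrix.of_apply]
  linear_combination h / 2

theorem le_two_of_injective_of_range_subset {K : Type*} [DecidableEq K] [Ring K] {k : ℕ}
    {x : Fin k → K} (hx : Injective x) (hrange : Set.range x ⊆ {1, -1}) : k ≤ 2 := by
  simpa using Finset.card_le_card_of_injOn (s := Finset.univ) (t := {1, -1}) x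
    (fun i _ => by simpa using hrange ⟨i, rfl⟩) hx.injOn |>.trans Finset.card_le_two

namespace Matrix

variable {ι κ K : Type*}

def HasNonvanishingMinors [CommRing K] (M : Matrix ι κ K) : Prop :=
  ∀ (k : ℕ) (ri : Fin k → ι) (ci : Fin k → κ), Injective ri → Injective ci →
    (M.submatrix ri ci).det ≠ 0

theorem HasNonvanishingMinors.apply_ne_zero [CommRing K] {M : Matrix ι κ K}
    (hM : M.HasNonvanishingMinors) (i : ι) (j : κ) : M i j ≠ 0 := by
  simpa using hM 1 (fun _ => i) (fun _ => j) (injective_of_subsingleton _)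
    (injective_of_subsingleton _)

theorem det_fin_two_of_mul_mul_add_mul_mul [CommRing K] (a b x y : Fin 2 → K) (A B : K) :
    (of fun i j => a i * b j * (A + x i * y j * B)).det
      = a 0 * a 1 * b 0 * b 1 * A * B * (x 0 - x 1) * (y 0 - y 1) := by
  simp only [det_fin_two, of_apply]
  ring

theorem hasNonvanishingMinors_iff_of_apply_eq [Field K] {M : Matrix ι κ K} {a : ι → K}
    {b : κ → K} {x : ι → K} {y : κ → K} {A B : K}
    (hM : ∀ i j, M i j = a i * b j * (A + x i * y j * B))
    (ha : ∀ i, a i ≠ 0) (hb : ∀ j, b j ≠ 0) (hx : Injective x) (hy : Injective y)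
    (hxr : Set.range x = {1, -1}) (hyr : Set.range y = {1, -1}) (hA : A ≠ 0) (hB : B ≠ 0) :
    M.HasNonvanishingMinors ↔ A ≠ B ∧ A ≠ -B := by
  classical
  have entry_ne_zero : ∀ i j, M i j ≠ 0 ↔ A + x i * y j * B ≠ 0 := fun i j => by
    simp [hM, ha, hb]
  constructor
  · intro hmin
    obtain ⟨i, hi⟩ : (1 : K) ∈ Set.range x := hxr ▸ Set.mem_insert _ _
    obtain ⟨j₁, hj₁⟩ : (1 : K) ∈ Set.range y := hyr ▸ Set.mem_insert _ _
    obtain ⟨j₂, hj₂⟩ : (-1 : K) ∈ Set.range y := hyr ▸ Set.mem_insert_of_mem _ rfl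
    have h₁ := (entry_ne_zero i j₁).1 (hmin.apply_ne_zero i j₁)
    have h₂ := (entry_ne_zero i j₂).1 (hmin.apply_ne_zero i j₂)
    rw [hi, hj₁, one_mul, one_mul, ← sub_neg_eq_add] at h₁
    rw [hi, hj₂, one_mul, neg_one_mul, ← sub_eq_add_neg] at h₂
    exact ⟨sub_ne_zero.1 h₂, sub_ne_zero.1 h₁⟩
  rintro ⟨hAB, hAB'⟩ k ri ci hri hci
  have hk := le_two_of_injective_of_range_subset (hx.comp hri)
    (hxr ▸ Set.range_comp_subset_range _ _)
  interval_cases k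
  · simp
  · rw [det_fin_one, submatrix_apply, entry_ne_zero]
    rcases hxr.subset ⟨ri 0, rfl⟩ with h | (h : _ = -1) <;>
      rcases hyr.subset ⟨ci 0, rfl⟩ with h' | (h' : _ = -1) <;>
      simp only [h, h', mul_one, one_mul, neg_mul, neg_neg, ne_eq, ← sub_eq_add_neg, sub_eq_zero,
        add_eq_zero_iff_eq_neg] <;>
      assumption
  · have hdet := det_fin_two_of_mul_mul_add_mul_mul (a ∘ ri) (b ∘ ci) (x ∘ ri) (y ∘ ci) A B
    simp only [Function.comp_apply] at hdet
    have h01 : (0 : Fin 2) ≠ 1 := by decide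
    rw [show M.submatrix ri ci = of fun i j => a (ri i) * b (ci j) * (A + x (ri i) * y (ci j) * B)
      from ext fun i j => hM _ _, hdet]
    simp [ha, hb, hA, hB, sub_eq_zero, hx.ne (hri.ne h01), hy.ne (hci.ne h01)]

end Matrix

theorem squares_compressed_fourier_nonvanishing_minors_iff (p : ℕ) [Fact p.Prime]
    (F : Type*) [Field F] [Fintype F] [DecidableEq F] [CharP F p] (hodd : Odd (Fintype.card F))
    (H : Subgroup Fˣ) [Fintype H] (hH : ∀ u : Fˣ, u ∈ H ↔ ∃ a : Fˣ, a ^ 2 = u)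
    (χ : H →* ℂˣ) (hχ : χ ≠ 1)
    (χ₁ χ₂ : Fˣ →* ℂˣ) (hχ₁ : ∀ h : H, χ₁ (h : Fˣ) = χ h)
    (hχ₂ : ∀ h : H, χ₂ (h : Fˣ) = χ h) (hne : χ₁ ≠ χ₂)
    (R S : Finset F)
    (hR : IsOrbitReprSet H {x : F | x ≠ 0} R)
    (hS : IsOrbitReprSet H {x : F | x ≠ 0} S) :
    (∀ (k : ℕ) (ri : Fin k → R) (ci : Fin k → S),
      Function.Injective ri → Function.Injective ci →
      (Matrix.of fun i j : Fin k =>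
        ∑ h : H, (χ h : ℂ) *
          canonicalAddChar p F (((h : Fˣ) : F) * (ri i : F) * (ci j : F))).det ≠ 0)
    ↔ (gaussSum' p F χ₁ ≠ gaussSum' p F χ₂ ∧ gaussSum' p F χ₁ ≠ -gaussSum' p F χ₂) := by
  have hF : ringChar F ≠ 2 := fun h =>
    Nat.not_even_iff_odd.2 hodd (Nat.even_iff.2 (FiniteField.even_card_iff_char_two.1 h))
  have ne_one : ∀ {φ : Fˣ →* ℂˣ}, (∀ h : H, φ h = χ h) → φ ≠ 1 := fun hφ h1 =>
    hχ (MonoidHom.ext fun h => by rw [← hφ, h1]; rfl)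
  have hψ := MulChar.ofUnitHom_eq_mul_quadraticChar
    (fun u => (hχ₁ ⟨u ^ 2, (hH _).2 ⟨u, rfl⟩⟩).trans (hχ₂ _).symm) hne
  have hψ_ne_zero : ∀ r : F, r ≠ 0 → (MulChar.ofUnitHom χ₁ r)⁻¹ ≠ 0 := fun r hr =>
    inv_ne_zero (MulChar.apply_ne_zero_iff.2 hr.isUnit)
  -- the left-hand side is `(compressedFourierMatrix p H χ R S).HasNonvanishingMinors` by unfolding
  exact Matrix.hasNonvanishingMinors_iff_of_apply_eq (M := compressedFourierMatrix p H χ R S)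
    (fun r s => compressedFourierMatrix_apply hH hχ₁ hψ r s (hR.ne_zero r.2) (hS.ne_zero s.2))
    (fun r => div_ne_zero (hψ_ne_zero r (hR.ne_zero r.2)) two_ne_zero)
    (fun s => hψ_ne_zero s (hS.ne_zero s.2))
    (hR.injective_quadraticChar hH) (hS.injective_quadraticChar hH)
    (hR.range_quadraticChar hH hF) (hS.range_quadraticChar hH hF)
    (gaussSum'_ne_zero p F (ne_one hχ₁)) (gaussSum'_ne_zero p F (ne_one hχ₂))
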